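/- Let c : ℝ² → Fin 2 be the parallel-stripes 2-coloring defined by c(x, y) = (⌊y / (√3/2)⌋ mod 2), i.e. horizontal strips of width √3/2, each strip closed on its lower side and open on its upper side, with alternating colors. Then for any three points a, b, d ∈ ℝ² with ‖a − b‖ = ‖b − d‖ = ‖a − d‖ = 1 (a unit equilateral triangle), it is not the case that c(a) = c(b) = c(d). -/

import Mathlib

open MeasureTheory Real

noncomputable section

abbrev Plane := EuclideanSpace ℝ (Fin 2)

def vec (x y : ℝ) : Plane := (WithLp.equiv 2 (Fin 2 → ℝ)).symm ![x, y]

open scoped Fin.IntCast in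
/-- The parallel-stripes 2-coloring: horizontal strips of width `√3/2`, closed below and
open above, with alternating colors; the color of `(x, y)` is `⌊y/(√3/2)⌋ mod 2`. -/
def stripes : Plane → Fin 2 := fun x => ((⌊x 1 / (Real.sqrt 3 / 2)⌋ : ℤ) : Fin 2)

/-! The heights `p, q, r` of the three edges of a unit equilateral triangle (their vertical
components) satisfy `p + q + r = 0` and `p² + q² + r² = 3/2`. Hence some edge has height at least
`√3/2` (the strip width), and the other two edges then have height at most `√3/2`. Two points of
equal color at vertical distance at most `√3/2` lie in the same strip, since their strip indices
differ by at most one and have the same parity. So the two short edges put all three vertices in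
one strip, where every height is less than `√3/2`, contradicting the long edge. -/

lemma floor_div_eq_of_modEq_of_abs_sub_le {w y y' : ℝ} (hw : 0 < w)
    (hmod : ⌊y / w⌋ ≡ ⌊y' / w⌋ [ZMOD 2]) (hyy' : |y - y'| ≤ w) : ⌊y / w⌋ = ⌊y' / w⌋ := by
  have hdiv : |y / w - y' / w| ≤ 1 := by
    rwa [← sub_div, abs_div, abs_of_pos hw, div_le_one hw]
  have hlt : ∀ x x' : ℝ, |x - x'| ≤ 1 → ⌊x⌋ < ⌊x'⌋ + 2 := fun x x' h => by
    have : (⌊x⌋ : ℝ) < ⌊x'⌋ + 2 := by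
      linarith [Int.floor_le x, Int.lt_floor_add_one x', (abs_le.mp h).2]
    exact_mod_cast this
  have h₁ := hlt _ _ hdiv
  have h₂ := hlt _ _ (abs_sub_comm (y / w) _ ▸ hdiv)
  rw [Int.ModEq] at hmod
  omega

lemma abs_sub_lt_of_floor_div_eq {w y y' : ℝ} (hw : 0 < w) (h : ⌊y / w⌋ = ⌊y' / w⌋) :
    |y - y'| < w := by
  have := Int.abs_sub_lt_one_of_floor_eq_floor h
  rwa [← sub_div, abs_div, abs_of_pos hw, div_lt_one hw] at this

lemma three_quarters_le_sq_of_sum_sq {p q r : ℝ} (hsum : p + q + r = 0)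
    (hsq : p ^ 2 + q ^ 2 + r ^ 2 = 3 / 2) : 3 / 4 ≤ p ^ 2 ∨ 3 / 4 ≤ q ^ 2 ∨ 3 / 4 ≤ r ^ 2 := by
  by_contra! h
  obtain ⟨hp, hq, hr⟩ := h
  have hr' : r = -(p + q) := by linarith
  subst hr'
  nlinarith [sq_nonneg (p + q), sq_nonneg (p - q)]

lemma sq_le_three_quarters_of_sum_sq {p q r : ℝ} (hsum : p + q + r = 0)
    (hsq : p ^ 2 + q ^ 2 + r ^ 2 = 3 / 2) (hp : 3 / 4 ≤ p ^ 2) : q ^ 2 ≤ 3 / 4 := by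
  have hr' : r = -(p + q) := by linarith
  subst hr'
  nlinarith [sq_nonneg (p + q)]

lemma sq_add_mul_add_sq_of_unit_equilateral {s p t q : ℝ} (he : s ^ 2 + p ^ 2 = 1)
    (hf : t ^ 2 + q ^ 2 = 1) (hef : (s + t) ^ 2 + (p + q) ^ 2 = 1) :
    p ^ 2 + p * q + q ^ 2 = 3 / 4 := by
  -- `(t, q)` is `(s, p)` rotated by `±2π/3`,
  -- and `sin² θ + sin θ sin (θ ± 2π/3) + sin² (θ ± 2π/3) = 3/4`
  nlinarith

lemma dist_sq_plane (u v : Plane) : dist u v ^ 2 = (u 0 - v 0) ^ 2 + (u 1 - v 1) ^ 2 := by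
  rw [EuclideanSpace.dist_eq, Real.sq_sqrt (by positivity)]
  simp [Fin.sum_univ_two, Real.dist_eq, sq_abs]

lemma stripes_eq_stripes_iff (u v : Plane) :
    stripes u = stripes v ↔ ⌊u 1 / (√3 / 2)⌋ ≡ ⌊v 1 / (√3 / 2)⌋ [ZMOD 2] :=
  ZMod.intCast_eq_intCast_iff _ _ 2

lemma sum_sq_height_sub_of_unit_equilateral {a b d : Plane} (hab : dist a b = 1)
    (hbd : dist b d = 1) (had : dist a d = 1) :
    (a 1 - b 1) ^ 2 + (b 1 - d 1) ^ 2 + (d 1 - a 1) ^ 2 = 3 / 2 := by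
  have hcoord : ∀ {u v : Plane}, dist u v = 1 → (u 0 - v 0) ^ 2 + (u 1 - v 1) ^ 2 = 1 :=
    fun h => by rw [← dist_sq_plane, h, one_pow]
  have hef : (a 0 - b 0 + (b 0 - d 0)) ^ 2 + (a 1 - b 1 + (b 1 - d 1)) ^ 2 = 1 := by
    simpa only [sub_add_sub_cancel] using hcoord had
  linear_combination 2 * sq_add_mul_add_sq_of_unit_equilateral (hcoord hab) (hcoord hbd) hef

lemma false_of_modEq_of_long_edge {y₁ y₂ y₃ : ℝ}
    (hsq : (y₁ - y₂) ^ 2 + (y₂ - y₃) ^ 2 + (y₃ - y₁) ^ 2 = 3 / 2)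
    (h₁₂ : ⌊y₁ / (√3 / 2)⌋ ≡ ⌊y₂ / (√3 / 2)⌋ [ZMOD 2])
    (h₂₃ : ⌊y₂ / (√3 / 2)⌋ ≡ ⌊y₃ / (√3 / 2)⌋ [ZMOD 2])
    (hlong : 3 / 4 ≤ (y₁ - y₂) ^ 2) : False := by
  have hw : 0 < √3 / 2 := by positivity
  have hw2 : (√3 / 2) ^ 2 = 3 / 4 := by rw [div_pow, Real.sq_sqrt (by norm_num)]; norm_num
  have hshort : ∀ {x : ℝ}, x ^ 2 ≤ 3 / 4 → |x| ≤ √3 / 2 :=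
    fun h => abs_le_of_sq_le_sq (hw2 ▸ h) hw.le
  have e₂₃ := floor_div_eq_of_modEq_of_abs_sub_le hw h₂₃
    (hshort (sq_le_three_quarters_of_sum_sq (by ring) hsq hlong))
  have e₃₁ := floor_div_eq_of_modEq_of_abs_sub_le hw (h₁₂.trans h₂₃).symm
    (hshort (sq_le_three_quarters_of_sum_sq (q := y₃ - y₁) (r := y₂ - y₃) (by ring) (by linarith)
      hlong))
  have hlt := abs_sub_lt_of_floor_div_eq hw (e₂₃.trans e₃₁).symm
  nlinarith [sq_abs (y₁ - y₂), abs_nonneg (y₁ - y₂)]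

/-- No unit equilateral triangle is monochromatic for the stripes coloring. -/
theorem stmt10 (a b d : Plane)
    (hab : dist a b = 1) (hbd : dist b d = 1) (had : dist a d = 1) :
    ¬ (stripes a = stripes b ∧ stripes b = stripes d) := by
  rintro ⟨h₁, h₂⟩
  rw [stripes_eq_stripes_iff] at h₁ h₂
  have hsq := sum_sq_height_sub_of_unit_equilateral hab hbd had
  rcases three_quarters_le_sq_of_sum_sq (by ring) hsq with hlong | hlong | hlong
  · exact false_of_modEq_of_long_edge hsq h₁ h₂ hlong
  · exact false_of_modEq_of_long_edge (by linarith) h₂ (h₁.trans h₂).symm hlong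
  · exact false_of_modEq_of_long_edge (by linarith) (h₁.trans h₂).symm h₁ hlong

end
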